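/- For every n ≥ 1 and every s > 0, the matrix s·I − Q^{(n)} is invertible and 1 − s·Σ_{j=0}^{n−1} ((s·I − Q^{(n)})^{−1})_{0,j} = det(−Q^{(n)}) / det(s·I − Q^{(n)}) = ∏_{ν=1}^n λ_ν^{(n)}/(s + λ_ν^{(n)}), where λ_1^{(n)},…,λ_n^{(n)} are the eigenvalues of −Q^{(n)}. (The left-hand side is the Laplace transform E e^{−s T_{0,n}} of the hitting time of state n from state 0.) -/

import Mathlib

/-!
Write `n = m + 1`, `Q = bdMatrix a b n` and `M = s • 1 - Q`. Applying
`adjugate M * M = det M • 1` to the all-ones vector and reading off row `0` gives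
`det M = ∑ⱼ adj(M)₀ⱼ · (row sum j of M)`. The row sums of `M` are `s`, except for the last one,
which is `s + b m`. Since `M` is tridiagonal, the cofactor `adj(M)₀ₘ` is the triangular minor
`b 0 ⋯ b (m - 1)`, which does not depend on `s`; hence `det M - s ∑ⱼ adj(M)₀ⱼ = b 0 ⋯ b m = det (-Q)`,
which is the Laplace identity after dividing by `det M`. `Q` has nonnegative off-diagonal entries
and nonpositive row sums, so `M` is strictly diagonally dominant, hence invertible. The product
formula comes from evaluating the characteristic polynomial of `-Q` at `-s` and at `0`.
-/

/-- The generator `Q^(n)` of the birth–death chain on `{0,…,n}` absorbed at `n`,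
restricted to the transient states `{0,…,n-1}`. -/
noncomputable def bdMatrix (a b : ℕ → ℝ) (n : ℕ) : Matrix (Fin n) (Fin n) ℝ :=
  fun i j =>
    if (j : ℕ) = (i : ℕ) + 1 then b i
    else if (i : ℕ) = (j : ℕ) + 1 then a i
    else if (i : ℕ) = (j : ℕ) then
      (if (i : ℕ) = 0 then -(b 0) else -(a i + b i))
    else 0

open Polynomial Finset

namespace Matrix

variable {R : Type*} [CommRing R] {ι : Type*} [Fintype ι] [DecidableEq ι]

theorem sum_adjugate_mul_sum_row (A : Matrix ι ι R) (i : ι) :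
    ∑ j, A.adjugate i j * ∑ k, A j k = A.det := by
  have h := congrFun (congrArg (· *ᵥ fun _ => (1 : R)) (adjugate_mul A)) i
  rw [← mulVec_mulVec, smul_mulVec, one_mulVec] at h
  simpa [mulVec, dotProduct] using h

theorem adjugate_zero_last_of_lowerHessenberg {m : ℕ} (A : Matrix (Fin (m + 1)) (Fin (m + 1)) R)
    (hA : ∀ i j : Fin (m + 1), (i : ℕ) + 1 < j → A i j = 0) :
    A.adjugate 0 (Fin.last m) = (-1) ^ m * ∏ k : Fin m, A k.castSucc k.succ := by
  rw [adjugate_fin_succ_eq_det_submatrix, Fin.val_last, Fin.val_zero, add_zero,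
    det_of_isLowerTriangular (A.submatrix _ _) fun k l (hkl : k < l) => hA _ _ ?_]
  · simp [Fin.succAbove_last]
  · simp only [Fin.succAbove_last, Fin.zero_succAbove, Fin.val_castSucc, Fin.val_succ]
    exact Nat.succ_lt_succ hkl

theorem det_smul_one_add_of_charpoly_eq_prod {A : Matrix ι ι R} {lam : ι → R}
    (h : A.charpoly = ∏ ν, (X - C (lam ν))) (s : R) :
    (s • 1 + A).det = ∏ ν, (s + lam ν) := by
  have h' := congrArg (eval (-s)) h
  rw [eval_charpoly, eval_prod] at h'
  simp only [eval_sub, eval_X, eval_C] at h'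
  calc (s • 1 + A).det = (-1) ^ Fintype.card ι * (scalar ι (-s) - A).det := by
        rw [← det_neg, neg_sub, scalar_apply, ← smul_one_eq_diagonal, neg_smul, sub_neg_eq_add,
          add_comm]
    _ = ∏ ν, (s + lam ν) := by
        rw [h', ← Finset.card_univ, ← prod_neg]
        exact prod_congr rfl fun _ _ => by ring

theorem det_smul_one_sub_ne_zero_of_rowSum_nonpos {Q : Matrix ι ι ℝ}
    (hoff : ∀ i j, i ≠ j → 0 ≤ Q i j) (hrow : ∀ i, ∑ j, Q i j ≤ 0) {s : ℝ} (hs : 0 < s) :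
    (s • 1 - Q).det ≠ 0 := by
  refine det_ne_zero_of_sum_row_lt_diag fun i => ?_
  have hoff_sum : ∑ j ∈ univ.erase i, ‖(s • 1 - Q) i j‖ = ∑ j ∈ univ.erase i, Q i j :=
    sum_congr rfl fun j hj => by
      have hji := (mem_erase.mp hj).1
      simp [one_apply_ne' hji, abs_of_nonneg (hoff i j hji.symm)]
  have hdiag : ‖(s • 1 - Q) i i‖ = s - Q i i := by
    have : Q i i ≤ 0 := by
      have := hrow i
      rw [← add_sum_erase _ _ (mem_univ i)] at this
      linarith [sum_nonneg fun j (hj : j ∈ univ.erase i) => hoff i j (mem_erase.mp hj).1.symm]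
    simp [abs_of_nonneg (by linarith : 0 ≤ s - Q i i)]
  rw [hoff_sum, hdiag, sum_erase_eq_sub (mem_univ i)]
  linarith [hrow i]

end Matrix

theorem Fin.sum_ite_val_eq {M : Type*} [AddCommMonoid M] (n c : ℕ) (v : M) :
    ∑ j : Fin n, (if (j : ℕ) = c then v else 0) = if c < n then v else 0 := by
  simpa using Fin.sum_univ_eq_sum_range (fun j => if j = c then v else 0) n

section bdMatrix

variable (a b : ℕ → ℝ)

theorem bdMatrix_eq_zero_of_succ_lt {n : ℕ} {i j : Fin n} (h : (i : ℕ) + 1 < j) :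
    bdMatrix a b n i j = 0 := by
  simp only [bdMatrix]
  split_ifs <;> first | rfl | omega

theorem bdMatrix_castSucc_succ {m : ℕ} (k : Fin m) :
    bdMatrix a b (m + 1) k.castSucc k.succ = b k := by
  simp [bdMatrix]

theorem bdMatrix_nonneg_of_ne {a b : ℕ → ℝ} (ha : ∀ i, 1 ≤ i → 0 ≤ a i) (hb : ∀ i, 0 ≤ b i)
    {n : ℕ} {i j : Fin n} (h : i ≠ j) : 0 ≤ bdMatrix a b n i j := by
  simp only [bdMatrix]
  split_ifs <;>
    first | exact hb _ | exact ha _ (by omega) | exact le_rfl | exact absurd (Fin.ext ‹_›) h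

theorem sum_bdMatrix_row {m : ℕ} (i : Fin (m + 1)) :
    ∑ j, bdMatrix a b (m + 1) i j = if i = Fin.last m then -b m else 0 := by
  have hentry : ∀ j : Fin (m + 1), bdMatrix a b (m + 1) i j =
      (if (j : ℕ) = i + 1 then b i else 0) +
        (if (j : ℕ) = i - 1 then (if 0 < (i : ℕ) then a i else 0) else 0) +
        (if (j : ℕ) = i then -(b i + if 0 < (i : ℕ) then a i else 0) else 0) := by
    intro j
    simp only [bdMatrix]
    split_ifs <;> first | omega | ring1 | grind
  simp only [hentry, sum_add_distrib, Fin.sum_ite_val_eq, Fin.ext_iff, Fin.val_last]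
  have := i.isLt
  split_ifs <;> first | omega | ring1 | grind

theorem det_smul_one_sub_bdMatrix_ne_zero {a b : ℕ → ℝ} (ha : ∀ i, 1 ≤ i → 0 ≤ a i)
    (hb : ∀ i, 0 ≤ b i) {m : ℕ} {s : ℝ} (hs : 0 < s) :
    (s • 1 - bdMatrix a b (m + 1)).det ≠ 0 :=
  Matrix.det_smul_one_sub_ne_zero_of_rowSum_nonpos (fun _ _ => bdMatrix_nonneg_of_ne ha hb)
    (fun i => by rw [sum_bdMatrix_row]; split_ifs <;> linarith [hb m]) hs

open Matrix in
theorem adjugate_smul_one_sub_bdMatrix_zero_last {m : ℕ} (s : ℝ) :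
    (s • 1 - bdMatrix a b (m + 1)).adjugate 0 (Fin.last m) = ∏ k : Fin m, b k := by
  rw [adjugate_zero_last_of_lowerHessenberg _ fun i j hij => ?_]
  · simp [one_apply_ne Fin.castSucc_lt_succ.ne, bdMatrix_castSucc_succ, prod_neg, ← mul_assoc,
      ← pow_add]
  · simp [one_apply_ne (show i ≠ j by omega), bdMatrix_eq_zero_of_succ_lt a b hij]

open Matrix in
theorem det_smul_one_sub_bdMatrix {m : ℕ} (s : ℝ) :
    (s • 1 - bdMatrix a b (m + 1)).det =
      s * ∑ j, (s • 1 - bdMatrix a b (m + 1)).adjugate 0 j + ∏ k : Fin (m + 1), b k := by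
  have hrow : ∀ j, ∑ k, (s • 1 - bdMatrix a b (m + 1)) j k =
      s + if j = Fin.last m then b m else 0 := by
    intro j
    simp only [Matrix.sub_apply, Matrix.smul_apply, one_apply, smul_eq_mul, mul_ite, mul_one,
      mul_zero, sum_sub_distrib, sum_ite_eq, mem_univ, ↓reduceIte, sum_bdMatrix_row]
    split_ifs <;> ring
  rw [← sum_adjugate_mul_sum_row _ 0]
  simp only [hrow, mul_add, sum_add_distrib, mul_ite, mul_zero, sum_ite_eq', mem_univ, if_true,
    ← sum_mul, adjugate_smul_one_sub_bdMatrix_zero_last, Fin.prod_univ_castSucc, Fin.val_castSucc,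
    Fin.val_last]
  ring

theorem det_neg_bdMatrix {m : ℕ} : (-bdMatrix a b (m + 1)).det = ∏ k : Fin (m + 1), b k := by
  simpa using det_smul_one_sub_bdMatrix a b (m := m) 0

theorem one_sub_mul_sum_inv_smul_one_sub_bdMatrix {m : ℕ} {s : ℝ}
    (h : (s • 1 - bdMatrix a b (m + 1)).det ≠ 0) :
    1 - s * ∑ j, (s • 1 - bdMatrix a b (m + 1))⁻¹ 0 j =
      (-bdMatrix a b (m + 1)).det / (s • 1 - bdMatrix a b (m + 1)).det := by
  have hdet := det_smul_one_sub_bdMatrix a b s (m := m)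
  rw [eq_div_iff h, Matrix.inv_def, Ring.inverse_eq_inv', det_neg_bdMatrix]
  simp only [Matrix.smul_apply, smul_eq_mul, ← mul_sum]
  field_simp
  linarith

end bdMatrix

/-- for every `n ≥ 1` and `s > 0`, the matrix `s•I − Q^{(n)}` is invertible and
`1 − s·Σ_j ((s•I − Q^{(n)})⁻¹)_{0,j} = det(−Q^{(n)})/det(s•I − Q^{(n)}) = ∏_ν λ_ν/(s+λ_ν)`. -/
theorem laplace_transform_hitting_time_from_zero
    (a b : ℕ → ℝ) (ha : ∀ i, 1 ≤ i → 0 < a i) (hb : ∀ i, 0 < b i)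
    (n : ℕ) (hn : 1 ≤ n)
    (lam : Fin n → ℝ)
    (hchar : (-(bdMatrix a b n)).charpoly =
      ∏ ν : Fin n, (Polynomial.X - Polynomial.C (lam ν)))
    (s : ℝ) (hs : 0 < s) :
    IsUnit (s • (1 : Matrix (Fin n) (Fin n) ℝ) - bdMatrix a b n).det ∧
    1 - s * ∑ j : Fin n,
        (s • (1 : Matrix (Fin n) (Fin n) ℝ) - bdMatrix a b n)⁻¹ ⟨0, hn⟩ j =
      (-(bdMatrix a b n)).det /
        (s • (1 : Matrix (Fin n) (Fin n) ℝ) - bdMatrix a b n).det ∧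
    (-(bdMatrix a b n)).det /
        (s • (1 : Matrix (Fin n) (Fin n) ℝ) - bdMatrix a b n).det =
      ∏ ν : Fin n, lam ν / (s + lam ν) := by
  obtain ⟨m, rfl⟩ : ∃ m, n = m + 1 := ⟨n - 1, by omega⟩
  have hdet : (s • 1 - bdMatrix a b (m + 1)).det ≠ 0 :=
    det_smul_one_sub_bdMatrix_ne_zero (fun i hi => (ha i hi).le) (fun i => (hb i).le) hs
  have hdet_neg : (-bdMatrix a b (m + 1)).det = ∏ ν, lam ν := by
    simpa using Matrix.det_smul_one_add_of_charpoly_eq_prod hchar 0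
  refine ⟨hdet.isUnit, one_sub_mul_sum_inv_smul_one_sub_bdMatrix a b hdet, ?_⟩
  rw [hdet_neg, sub_eq_add_neg, Matrix.det_smul_one_add_of_charpoly_eq_prod hchar,
    prod_div_distrib]
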